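/- For every even integer n ≥ 6, with a = σ_{n-3}·T·α₀·σ_{n-3}⁻¹ and b = T·σ_{n-1}⁻¹·α₂ in EM_n, one has (ab)^(n/2 − 1) = σ₁σ₃σ₅⋯σ_{n-5}·σ_{n-2} in EM_n; in particular the element z = σ₁σ₃⋯σ_{n-5}σ_{n-2} (the product of the σ_k over the odd indices k from 1 to n−5, followed by σ_{n-2}) belongs to the subgroup of EM_n generated by {a, b}. -/

import Mathlib

/-!
The extended mapping class group `EM n` of the `n`-punctured sphere, presented with
generators `σ₁, …, σ_{n-1}`, `T` and relations:
`T² = 1`; `(T σᵢ)² = 1`; `σᵢσⱼ = σⱼσᵢ` for `|i - j| ≥ 2`;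
`σᵢσⱼσᵢ = σⱼσᵢσⱼ` for `|i - j| = 1`;
`σ₁⋯σ_{n-1} σ_{n-1}⋯σ₁ = 1`; `(σ₁⋯σ_{n-1})ⁿ = 1`.
-/

namespace SphereEMCG

/-- Generators: `none` is the reflection `T`; `some i` is the half-twist `σ_{i+1}`. -/
abbrev Gen (n : ℕ) := Option (Fin (n - 1))

/-- The generator `T` as an element of the free group. -/
def Tf (n : ℕ) : FreeGroup (Gen n) := FreeGroup.of (none : Gen n)

/-- The generator `σ_i` (for `1 ≤ i ≤ n - 1`) as an element of the free group. -/
def σf (n : ℕ) (i : ℕ) : FreeGroup (Gen n) :=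
  if h : 1 ≤ i ∧ i ≤ n - 1 then FreeGroup.of (some ⟨i - 1, by omega⟩) else 1

/-- The word `σ_a σ_{a+1} ⋯ σ_b` in the free group. -/
def σfProd (n : ℕ) (a b : ℕ) : FreeGroup (Gen n) :=
  ((List.range' a (b + 1 - a)).map (σf n)).prod

/-- The word `σ_b σ_{b-1} ⋯ σ_a` in the free group. -/
def σfProdRev (n : ℕ) (a b : ℕ) : FreeGroup (Gen n) :=
  ((List.range' a (b + 1 - a)).reverse.map (σf n)).prod

/-- The defining relations of the extended mapping class group of the
`n`-punctured sphere. -/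
def rels (n : ℕ) : Set (FreeGroup (Gen n)) :=
  { r | r = Tf n * Tf n
      ∨ (∃ i, 1 ≤ i ∧ i ≤ n - 1 ∧ r = (Tf n * σf n i) * (Tf n * σf n i))
      ∨ (∃ i j, 1 ≤ i ∧ i ≤ n - 1 ∧ 1 ≤ j ∧ j ≤ n - 1 ∧ (i + 2 ≤ j ∨ j + 2 ≤ i) ∧
          r = σf n i * σf n j * (σf n j * σf n i)⁻¹)
      ∨ (∃ i j, 1 ≤ i ∧ i ≤ n - 1 ∧ 1 ≤ j ∧ j ≤ n - 1 ∧ (i + 1 = j ∨ j + 1 = i) ∧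
          r = σf n i * σf n j * σf n i * (σf n j * σf n i * σf n j)⁻¹)
      ∨ r = σfProd n 1 (n - 1) * σfProdRev n 1 (n - 1)
      ∨ r = (σfProd n 1 (n - 1)) ^ n }

/-- The extended mapping class group of the `n`-punctured sphere, by its
standard presentation. -/
abbrev EM (n : ℕ) := PresentedGroup (rels n)

/-- The orientation-reversing mapping class `T` in `EM n`. -/
def T (n : ℕ) : EM n := PresentedGroup.mk (rels n) (Tf n)

/-- The half-twist `σ_i` in `EM n`. -/
def σ (n : ℕ) (i : ℕ) : EM n := PresentedGroup.mk (rels n) (σf n i)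

/-- `α₀ = σ₁ ⋯ σ_{n-1}` in `EM n`. -/
def α₀ (n : ℕ) : EM n := PresentedGroup.mk (rels n) (σfProd n 1 (n - 1))

/-- `α₂ = σ₁ ⋯ σ_{n-3} σ_{n-2}²` in `EM n`. -/
def α₂ (n : ℕ) : EM n := PresentedGroup.mk (rels n) (σfProd n 1 (n - 2) * σf n (n - 2))

end SphereEMCG

namespace SphereEMCG
namespace Aux

variable {n : ℕ}

lemma pr_rel {r : FreeGroup (Gen n)} (h : r ∈ rels n) : PresentedGroup.mk (rels n) r = 1 :=
  (QuotientGroup.eq_one_iff r).mpr (Subgroup.subset_normalClosure h)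

lemma σ_out {i : ℕ} (h : ¬(1 ≤ i ∧ i ≤ n - 1)) : σ n i = 1 := by
  unfold σ σf
  rw [dif_neg h, map_one]

lemma hT : T n * T n = 1 := by
  have := pr_rel (n := n) (Or.inl rfl)
  rwa [map_mul] at this

lemma hTσ (i : ℕ) : T n * σ n i * T n = (σ n i)⁻¹ := by
  by_cases h : 1 ≤ i ∧ i ≤ n - 1
  · have := pr_rel (n := n) (Or.inr (Or.inl ⟨i, h.1, h.2, rfl⟩))
    simp only [map_mul] at this
    have h2 : (T n * σ n i) * (T n * σ n i) = 1 := this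
    calc T n * σ n i * T n = (T n * σ n i) * (T n * σ n i) * (σ n i)⁻¹ := by group
    _ = (σ n i)⁻¹ := by rw [h2, one_mul]
  · rw [σ_out h, mul_one, hT, inv_one]

lemma σ_T (i : ℕ) : (σ n i)⁻¹ * T n = T n * σ n i := by
  have h := hTσ (n := n) i
  have : (σ n i)⁻¹ * T n = (T n * σ n i * T n) * T n := by rw [h]
  rw [this, mul_assoc, hT, mul_one]

lemma hbraid (i : ℕ) (h1 : 1 ≤ i) (h2 : i + 1 ≤ n - 1) :
    σ n i * σ n (i + 1) * σ n i = σ n (i + 1) * σ n i * σ n (i + 1) := by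
  have := pr_rel (n := n) (Or.inr (Or.inr (Or.inr (Or.inl
    ⟨i, i + 1, h1, by omega, by omega, h2, Or.inl rfl, rfl⟩))))
  simp only [map_mul, map_inv] at this
  have := mul_eq_one_iff_eq_inv.mp this
  rwa [inv_inv] at this

lemma hcomm {i j : ℕ} (hij : i + 2 ≤ j) : σ n i * σ n j = σ n j * σ n i := by
  by_cases h1 : 1 ≤ i ∧ i ≤ n - 1
  · by_cases h2 : 1 ≤ j ∧ j ≤ n - 1
    · have := pr_rel (n := n) (Or.inr (Or.inr (Or.inl
        ⟨i, j, h1.1, h1.2, h2.1, h2.2, Or.inl hij, rfl⟩)))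
      simp only [map_mul, map_inv] at this
      have := mul_eq_one_iff_eq_inv.mp this
      rwa [inv_inv] at this
    · rw [σ_out h2, mul_one, one_mul]
  · rw [σ_out h1, mul_one, one_mul]

end Aux
end SphereEMCG
namespace SphereEMCG
namespace Aux

variable {n : ℕ}

/-- `σ_a σ_{a+1} ⋯ σ_{a+m-1}` -/
def Sp (n a m : ℕ) : EM n := ((List.range' a m).map (σ n)).prod

/-- `σ_{a+m-1} ⋯ σ_{a+1} σ_a` -/
def Rp (n a m : ℕ) : EM n := ((List.range' a m).reverse.map (σ n)).prod

/-- `σ_j σ_{j+2} σ_{j+4} ⋯ σ_{j+2(s-1)}` -/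
def OD (n j s : ℕ) : EM n := ((List.range s).map (fun t => σ n (2 * t + j))).prod

/-- product of triples `σ_{c+2t} σ_{c+2t+1} σ_{c+2t+3}` for `t < k` -/
def TP (n c k : ℕ) : EM n :=
  ((List.range k).map (fun t => σ n (c + 2 * t) * σ n (c + 2 * t + 1) * σ n (c + 2 * t + 3))).prod

lemma Sp_zero (a : ℕ) : Sp n a 0 = 1 := rfl

lemma Sp_one (a : ℕ) : Sp n a 1 = σ n a := by simp [Sp, List.range']

lemma Sp_succ_left (a m : ℕ) : Sp n a (m + 1) = σ n a * Sp n (a + 1) m := by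
  rw [Sp, List.range'_succ]; simp [Sp]

lemma Sp_succ_right (a m : ℕ) : Sp n a (m + 1) = Sp n a m * σ n (a + m) := by
  rw [Sp, List.range'_concat]; simp [Sp]

lemma Sp_append (a m k : ℕ) : Sp n a (m + k) = Sp n a m * Sp n (a + m) k := by
  rw [Sp, ← List.range'_append]
  simp only [one_mul, List.map_append, List.prod_append]
  rfl

lemma Rp_zero (a : ℕ) : Rp n a 0 = 1 := rfl

lemma Rp_succ_left (a m : ℕ) : Rp n a (m + 1) = Rp n (a + 1) m * σ n a := by
  rw [Rp, List.range'_succ]; simp [Rp]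

lemma Rp_succ_right (a m : ℕ) : Rp n a (m + 1) = σ n (a + m) * Rp n a m := by
  rw [Rp, List.range'_concat]; simp [Rp]

lemma OD_zero (j : ℕ) : OD n j 0 = 1 := rfl

lemma OD_succ (j s : ℕ) : OD n j (s + 1) = OD n j s * σ n (2 * s + j) := by
  rw [OD, List.range_succ]; simp [OD]

lemma TP_zero (c : ℕ) : TP n c 0 = 1 := rfl

lemma TP_succ (c k : ℕ) :
    TP n c (k + 1) = TP n c k * (σ n (c + 2 * k) * σ n (c + 2 * k + 1) * σ n (c + 2 * k + 3)) := by
  rw [TP, List.range_succ]; simp [TP]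

lemma TP_one (c : ℕ) : TP n c 1 = σ n c * σ n (c + 1) * σ n (c + 3) := by
  rw [show (1 : ℕ) = 0 + 1 from rfl, TP_succ, TP_zero, one_mul]; norm_num

/-- σ i commutes with Sp a m when all indices of the product are ≤ i - 2 -/
lemma comm_Sp_big {i a m : ℕ} (h : a + m + 1 ≤ i) : σ n i * Sp n a m = Sp n a m * σ n i := by
  induction m generalizing a with
  | zero => rw [Sp_zero, mul_one, one_mul]
  | succ m ih =>
    rw [Sp_succ_left]
    have hc : a + 2 ≤ i := by omega
    rw [← mul_assoc, ← hcomm hc, mul_assoc, ih (by omega), ← mul_assoc]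

/-- σ i commutes with Sp a m when i + 2 ≤ a -/
lemma comm_Sp_small {i a m : ℕ} (h : i + 2 ≤ a) : σ n i * Sp n a m = Sp n a m * σ n i := by
  induction m generalizing a with
  | zero => rw [Sp_zero, mul_one, one_mul]
  | succ m ih =>
    rw [Sp_succ_left, ← mul_assoc, hcomm h, mul_assoc, ih (by omega), ← mul_assoc]

/-- σ i commutes with OD j s when all indices 2t+j (t < s) are ≤ i - 2 -/
lemma comm_OD_big {i j s : ℕ} (h : 2 * s + j ≤ i) : σ n i * OD n j s = OD n j s * σ n i := by
  induction s with
  | zero => rw [OD_zero, mul_one, one_mul]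
  | succ s ih =>
    rw [OD_succ, ← mul_assoc, ih (by omega), mul_assoc,
      show σ n i * σ n (2 * s + j) = σ n (2 * s + j) * σ n i from
        (hcomm (show (2 * s + j) + 2 ≤ i by omega)).symm, ← mul_assoc]

/-- The key shift relation: `(σ_1 ⋯ σ_m) σ_i = σ_{i+1} (σ_1 ⋯ σ_m)` for `1 ≤ i < m ≤ n-1`. -/
lemma Sp_shift {m i : ℕ} (hm : m ≤ n - 1) (h1 : 1 ≤ i) (h2 : i + 1 ≤ m) :
    Sp n 1 m * σ n i = σ n (i + 1) * Sp n 1 m := by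
  obtain ⟨k, hk⟩ : ∃ k, m = (i + 1) + k := ⟨m - (i + 1), by omega⟩
  obtain ⟨p, hp⟩ : ∃ p, i = p + 1 := ⟨i - 1, by omega⟩
  subst hk hp
  rw [Sp_append]
  have e1 : Sp n 1 (p + 1 + 1) = Sp n 1 p * σ n (p + 1) * σ n (p + 2) := by
    rw [Sp_succ_right, Sp_succ_right, show 1 + (p + 1) = p + 2 by omega, show 1 + p = p + 1 by omega]
  have hbr : σ n (p + 1) * σ n (p + 2) * σ n (p + 1) = σ n (p + 2) * σ n (p + 1) * σ n (p + 2) := by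
    have := hbraid (n := n) (p + 1) (by omega) (by omega)
    simpa using this
  calc Sp n 1 (p + 1 + 1) * Sp n (1 + (p + 1 + 1)) k * σ n (p + 1)
      = Sp n 1 (p + 1 + 1) * (σ n (p + 1) * Sp n (1 + (p + 1 + 1)) k) := by
        rw [mul_assoc, comm_Sp_small (by omega)]
    _ = Sp n 1 p * (σ n (p + 1) * σ n (p + 2) * σ n (p + 1)) * Sp n (1 + (p + 1 + 1)) k := by
        rw [e1]; group
    _ = Sp n 1 p * (σ n (p + 2) * σ n (p + 1) * σ n (p + 2)) * Sp n (1 + (p + 1 + 1)) k := by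
        rw [hbr]
    _ = σ n (p + 2) * (Sp n 1 p * σ n (p + 1) * σ n (p + 2)) * Sp n (1 + (p + 1 + 1)) k := by
        have := comm_Sp_big (n := n) (i := p + 2) (a := 1) (m := p) (by omega)
        rw [← mul_assoc, ← mul_assoc, ← this]; group
    _ = σ n (p + 1 + 1) * (Sp n 1 (p + 1 + 1) * Sp n (1 + (p + 1 + 1)) k) := by
        rw [e1]; group

end Aux
end SphereEMCG
namespace SphereEMCG
namespace Aux

variable {n : ℕ}

lemma α₀_eq : α₀ n = Sp n 1 (n - 1) := by
  unfold α₀ σfProd Sp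
  rw [MonoidHom.map_list_prod, List.map_map]
  rfl

lemma α₂_eq : α₂ n = Sp n 1 (n - 2) * σ n (n - 2) := by
  unfold α₂ σfProd Sp
  rw [map_mul, MonoidHom.map_list_prod, List.map_map]
  rfl

lemma σfProdRev_eq : PresentedGroup.mk (rels n) (σfProdRev n 1 (n - 1)) = Rp n 1 (n - 1) := by
  unfold σfProdRev Rp
  rw [MonoidHom.map_list_prod, List.map_map]
  rfl

lemma hR4 : Sp n 1 (n - 1) * Rp n 1 (n - 1) = 1 := by
  have := pr_rel (n := n) (Or.inr (Or.inr (Or.inr (Or.inr (Or.inl rfl)))))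
  rw [map_mul, σfProdRev_eq] at this
  rw [show PresentedGroup.mk (rels n) (σfProd n 1 (n-1)) = Sp n 1 (n-1) from α₀_eq (n := n)] at this
  exact this

lemma hR5 : (Sp n 1 (n - 1)) ^ n = 1 := by
  have := pr_rel (n := n) (Or.inr (Or.inr (Or.inr (Or.inr (Or.inr rfl)))))
  rw [map_pow, show PresentedGroup.mk (rels n) (σfProd n 1 (n-1)) = Sp n 1 (n-1) from α₀_eq (n := n)] at this
  exact this

lemma Rp_eq_inv : Rp n 1 (n - 1) = (Sp n 1 (n - 1))⁻¹ := by
  rw [eq_inv_iff_mul_eq_one]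
  calc Rp n 1 (n-1) * Sp n 1 (n-1)
      = (Sp n 1 (n-1))⁻¹ * (Sp n 1 (n-1) * Rp n 1 (n-1)) * Sp n 1 (n-1) := by group
    _ = 1 := by rw [hR4]; group

end Aux
end SphereEMCG
namespace SphereEMCG
namespace Aux

variable {n : ℕ}

lemma T_conj_Sp (a m : ℕ) : T n * Sp n a m * T n = (Rp n a m)⁻¹ := by
  induction m generalizing a with
  | zero => rw [Sp_zero, Rp_zero, mul_one, hT, inv_one]
  | succ m ih =>
    rw [Sp_succ_left, Rp_succ_left, mul_inv_rev]
    calc T n * (σ n a * Sp n (a + 1) m) * T n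
        = (T n * σ n a * T n) * (T n * Sp n (a + 1) m * T n) := by
          have h := hT (n := n)
          calc T n * (σ n a * Sp n (a + 1) m) * T n
              = T n * σ n a * (T n * T n) * Sp n (a + 1) m * T n := by rw [h, mul_one]; group
            _ = (T n * σ n a * T n) * (T n * Sp n (a + 1) m * T n) := by group
      _ = (σ n a)⁻¹ * (Rp n (a + 1) m)⁻¹ := by rw [hTσ, ih]

lemma hTδ : T n * Sp n 1 (n - 1) * T n = Sp n 1 (n - 1) := by
  rw [T_conj_Sp, Rp_eq_inv, inv_inv]

/-- `δ (σ_{a+m-1} ⋯ σ_a) = (σ_{a+m} ⋯ σ_{a+1}) δ` -/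
lemma Rp_shift {a m : ℕ} (h1 : 1 ≤ a) (h2 : a + m ≤ n - 1) :
    Rp n (a + 1) m * Sp n 1 (n - 1) = Sp n 1 (n - 1) * Rp n a m := by
  induction m with
  | zero => rw [Rp_zero, Rp_zero, mul_one, one_mul]
  | succ m ih =>
    rw [Rp_succ_right, Rp_succ_right, mul_assoc, ih (by omega), ← mul_assoc,
      show a + 1 + m = (a + m) + 1 by omega,
      ← Sp_shift (n := n) (m := n - 1) (i := a + m) (le_refl _) (by omega) (by omega), mul_assoc]

/-- `P^k (σ_{a+k-1} ⋯ σ_a) = δ^k` where `a + k = n`. -/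
lemma P_pow_aux (hn : 6 ≤ n) :
    ∀ k a, 1 ≤ k → 1 ≤ a → a + k = n →
      (Sp n 1 (n - 2)) ^ k * Rp n a k = (Sp n 1 (n - 1)) ^ k := by
  intro k
  induction k with
  | zero => omega
  | succ k ih =>
    intro a _ ha hak
    rcases Nat.eq_zero_or_pos k with hk0 | hk0
    · subst hk0
      have ha' : a = n - 1 := by omega
      subst ha'
      have hP : Sp n 1 (n - 2) * σ n (n - 1) = Sp n 1 (n - 1) := by
        have := Sp_succ_right (n := n) 1 (n - 2)
        rw [show 1 + (n - 2) = n - 1 by omega] at this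
        rw [← this]; congr 1; omega
      rw [pow_one, pow_one, Rp_succ_right, Rp_zero, mul_one, add_zero, ← hP]
    · have hP : Sp n 1 (n - 2) * σ n (n - 1) = Sp n 1 (n - 1) := by
        have := Sp_succ_right (n := n) 1 (n - 2)
        rw [show 1 + (n - 2) = n - 1 by omega] at this
        rw [← this]; congr 1; omega
      calc (Sp n 1 (n - 2)) ^ (k + 1) * Rp n a (k + 1)
          = (Sp n 1 (n - 2)) ^ k * (Sp n 1 (n - 2) * (σ n (a + k) * Rp n a k)) := by
            rw [Rp_succ_right, pow_succ]; group
        _ = (Sp n 1 (n - 2)) ^ k * (Sp n 1 (n - 1) * Rp n a k) := by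
            rw [show a + k = n - 1 by omega, ← hP]; group
        _ = (Sp n 1 (n - 2)) ^ k * (Rp n (a + 1) k * Sp n 1 (n - 1)) := by
            rw [Rp_shift (by omega) (by omega)]
        _ = ((Sp n 1 (n - 2)) ^ k * Rp n (a + 1) k) * Sp n 1 (n - 1) := by group
        _ = (Sp n 1 (n - 1)) ^ (k + 1) := by
            rw [ih (a + 1) hk0 (by omega) (by omega), pow_succ]

lemma P_pow_eq_one (hn : 6 ≤ n) : (Sp n 1 (n - 2)) ^ (n - 1) = 1 := by
  have h := P_pow_aux hn (n - 1) 1 (by omega) (le_refl _) (by omega)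
  have hrp : Rp n 1 (n - 1) = (Sp n 1 (n - 1))⁻¹ := Rp_eq_inv
  rw [hrp] at h
  have : (Sp n 1 (n - 2)) ^ (n - 1) = (Sp n 1 (n - 1)) ^ (n - 1) * Sp n 1 (n - 1) := by
    rw [← h]; group
  rw [this, ← pow_succ, show n - 1 + 1 = n by omega, hR5]

end Aux
end SphereEMCG
namespace SphereEMCG
namespace Aux

section LocalIdentity

variable {G : Type*} [Group G]

/-- The key local identity used in the inductive step, in an abstract group. -/
lemma loc (a b c d e : G)
    (hab : a * b * a = b * a * b) (hbc : b * c * b = c * b * c) (hcd : c * d * c = d * c * d)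
    (hac : a * c = c * a) (had : a * d = d * a) (hbd : b * d = d * b)
    (hec : e * c = c * b) (hde : d * e * d = e * d * e) :
    a * (d * (e * (d * (c * (d * (a * (b * d))))))) =
      e * (a * (d * (e * (d * (c * (d * (a * d))))))) := by
  have Hcd : ∀ x : G, d * (c * (d * x)) = c * (d * (c * x)) := fun x => by
    simp only [← mul_assoc]; rw [← hcd]
  have Hcb : ∀ x : G, c * (b * (c * x)) = b * (c * (b * x)) := fun x => by
    simp only [← mul_assoc]; rw [← hbc]
  have Hec : ∀ x : G, e * (c * x) = c * (b * x) := fun x => by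
    rw [← mul_assoc, hec, mul_assoc]
  have Hde : ∀ x : G, d * (e * (d * x)) = e * (d * (e * x)) := fun x => by
    simp only [← mul_assoc]; rw [hde]
  have Hbd : ∀ x : G, b * (d * x) = d * (b * x) := fun x => by
    rw [← mul_assoc, hbd, mul_assoc]
  have Hac : ∀ x : G, a * (c * x) = c * (a * x) := fun x => by
    rw [← mul_assoc, hac, mul_assoc]
  have Had : ∀ x : G, a * (d * x) = d * (a * x) := fun x => by
    rw [← mul_assoc, had, mul_assoc]
  have Hab : ∀ x : G, b * (a * (b * x)) = a * (b * (a * x)) := fun x => by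
    simp only [← mul_assoc]; rw [← hab]
  conv_lhs => rw [Hcd, Hec, Hbd, Hcd, Hcb, Hab, Hac]
  conv_rhs => rw [Hde, Hec, Hbd, Hcd, Hec, Hac, Hec, Hab, Had, Hbd, Hac]

end LocalIdentity

end Aux
end SphereEMCG
namespace SphereEMCG
namespace Aux

section StepGeneric

variable {G : Type*} [Group G]

lemma step_generic (q y g1 g2 a b c d TPv : G)
    (h1 : g2 * q = q * g1) (h2 : a * q = q * g2) (h3 : b * q = q * a)
    (hcq : c * q = q * (b⁻¹ * (c * b))) (hdq : d * q = q * d)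
    (hya : y * a = a * y) (hyb : y * b = b * y) (hyc : y * c = c * y) (hyd : y * d = d * y)
    (hab : a * b * a = b * a * b) (hbc : b * c * b = c * b * c) (hcd : c * d * c = d * c * d)
    (hac : a * c = c * a) (had : a * d = d * a) (hbd : b * d = d * b)
    (IH : TPv * (q * q) * (g1 * (g2 * b)) = q * (q * q) * (y * b)) :
    (TPv * (a * (b * d))) * ((q * (c * d)) * (q * (c * d))) * (a * (b * d)) =
      (q * (c * d)) * ((q * (c * d)) * (q * (c * d))) * ((y * a) * d) := by
  set e := b⁻¹ * (c * b) with he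
  -- push-left rules
  have Ha : ∀ x : G, a * (q * x) = q * (g2 * x) := fun x => by
    rw [← mul_assoc, h2, mul_assoc]
  have Hb : ∀ x : G, b * (q * x) = q * (a * x) := fun x => by
    rw [← mul_assoc, h3, mul_assoc]
  have Hg2 : ∀ x : G, g2 * (q * x) = q * (g1 * x) := fun x => by
    rw [← mul_assoc, h1, mul_assoc]
  have Hc : ∀ x : G, c * (q * x) = q * (e * x) := fun x => by
    rw [← mul_assoc, hcq, mul_assoc]
  have Hd : ∀ x : G, d * (q * x) = q * (d * x) := fun x => by
    rw [← mul_assoc, hdq, mul_assoc]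
  have hbq : b⁻¹ * q = q * a⁻¹ := by
    calc b⁻¹ * q = b⁻¹ * (q * a) * a⁻¹ := by group
      _ = b⁻¹ * (b * q) * a⁻¹ := by rw [← h3]
      _ = q * a⁻¹ := by group
  have He : ∀ x : G, e * (q * x) = q * (a⁻¹ * (e * (a * x))) := fun x => by
    have : e * q = q * (a⁻¹ * (e * a)) := by
      rw [he]
      calc b⁻¹ * (c * b) * q = b⁻¹ * (c * (b * q)) := by group
        _ = b⁻¹ * (c * (q * a)) := by rw [h3]
        _ = b⁻¹ * (c * q * a) := by group
        _ = b⁻¹ * (q * (e * a)) := by rw [hcq, he]; group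
        _ = (b⁻¹ * q) * (e * a) := by group
        _ = q * (a⁻¹ * (e * a)) := by rw [hbq]; group
    rw [← mul_assoc, this]; group
  -- move-y-left rules
  have hye : y * e = e * y := by
    rw [he]
    calc y * (b⁻¹ * (c * b)) = b⁻¹ * (y * c * b) := by
          rw [← mul_assoc, ← mul_assoc]
          have : y * b⁻¹ = b⁻¹ * y := (Commute.inv_right hyb).eq
          rw [this]; group
      _ = b⁻¹ * (c * y * b) := by rw [hyc]
      _ = b⁻¹ * (c * b) * y := by rw [mul_assoc c y b, hyb]; group
  have Hay : ∀ x : G, a * (y * x) = y * (a * x) := fun x => by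
    rw [← mul_assoc, ← hya, mul_assoc]
  have Hcy : ∀ x : G, c * (y * x) = y * (c * x) := fun x => by
    rw [← mul_assoc, ← hyc, mul_assoc]
  have Hdy : ∀ x : G, d * (y * x) = y * (d * x) := fun x => by
    rw [← mul_assoc, ← hyd, mul_assoc]
  have Hey : ∀ x : G, e * (y * x) = y * (e * x) := fun x => by
    rw [← mul_assoc, ← hye, mul_assoc]
  have Hainvy : ∀ x : G, a⁻¹ * (y * x) = y * (a⁻¹ * x) := fun x => by
    have : a⁻¹ * y = y * a⁻¹ := (Commute.inv_right hya).eq.symm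
    rw [← mul_assoc, this, mul_assoc]
  -- Transform LHS
  have hLHS : (TPv * (a * (b * d))) * ((q * (c * d)) * (q * (c * d))) * (a * (b * d)) =
      (TPv * (q * q) * (g1 * (g2 * b))) * (b⁻¹ * (d * (e * (d * (c * (d * (a * (b * d)))))))) := by
    have expand : (a * (b * d)) * ((q * (c * d)) * (q * (c * d))) * (a * (b * d)) =
        a * (b * (d * (q * (c * (d * (q * (c * (d * (a * (b * d)))))))))) := by group
    calc (TPv * (a * (b * d))) * ((q * (c * d)) * (q * (c * d))) * (a * (b * d))
        = TPv * ((a * (b * d)) * ((q * (c * d)) * (q * (c * d))) * (a * (b * d))) := by group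
      _ = TPv * (a * (b * (d * (q * (c * (d * (q * (c * (d * (a * (b * d))))))))))) := by
          rw [expand]
      _ = TPv * (q * (q * (g1 * (g2 * (d * (e * (d * (c * (d * (a * (b * d))))))))))) := by
          rw [Hd, Hb, Ha, Hd, Hc, Hd, Ha, Hg2]
      _ = (TPv * (q * q) * (g1 * (g2 * b))) * (b⁻¹ * (d * (e * (d * (c * (d * (a * (b * d)))))))) := by
          group
  rw [hLHS, IH]
  -- Transform RHS
  have hRHS : (q * (c * d)) * ((q * (c * d)) * (q * (c * d))) * ((y * a) * d) =
      q * (q * q) * (y * (a⁻¹ * (e * (a * (d * (e * (d * (c * (d * (a * d)))))))))) := by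
    calc (q * (c * d)) * ((q * (c * d)) * (q * (c * d))) * ((y * a) * d)
        = q * (c * (d * (q * (c * (d * (q * (c * (d * (y * (a * d)))))))))) := by group
      _ = q * (q * (q * (a⁻¹ * (e * (a * (d * (e * (d * (c * (d * (y * (a * d)))))))))))) := by
          rw [Hd, Hc, Hd, Hc, Hd, He]
      _ = q * (q * (q * (y * (a⁻¹ * (e * (a * (d * (e * (d * (c * (d * (a * d)))))))))))) := by
          rw [Hdy, Hcy, Hdy, Hey, Hdy, Hay, Hey, Hainvy]
      _ = q * (q * q) * (y * (a⁻¹ * (e * (a * (d * (e * (d * (c * (d * (a * d)))))))))) := by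
          group
  rw [hRHS]
  -- use loc
  have hec : e * c = c * b := by
    rw [he]
    calc b⁻¹ * (c * b) * c = b⁻¹ * (c * b * c) := by group
      _ = b⁻¹ * (b * c * b) := by rw [← hbc]
      _ = c * b := by group
  have hde : d * e * d = e * d * e := by
    have hbinvd : b⁻¹ * d = d * b⁻¹ := (Commute.inv_left hbd).eq
    rw [he]
    calc d * (b⁻¹ * (c * b)) * d = (d * b⁻¹) * (c * (b * d)) := by group
      _ = (b⁻¹ * d) * (c * (d * b)) := by rw [hbinvd, hbd]
      _ = b⁻¹ * (d * c * d) * b := by group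
      _ = b⁻¹ * (c * d * c) * b := by rw [hcd]
      _ = (b⁻¹ * (c * b)) * ((b⁻¹ * (d * b)) * (b⁻¹ * (c * b))) := by group
      _ = (b⁻¹ * (c * b)) * (d * (b⁻¹ * (c * b))) := by
          have : b⁻¹ * (d * b) = d := by rw [← hbd]; group
          rw [this]
      _ = b⁻¹ * (c * b) * d * (b⁻¹ * (c * b)) := by group
  have hl := loc a b c d e hab hbc hcd hac had hbd hec hde
  calc q * (q * q) * (y * b) * (b⁻¹ * (d * (e * (d * (c * (d * (a * (b * d))))))))
      = q * (q * q) * (y * (a⁻¹ * (a * (d * (e * (d * (c * (d * (a * (b * d)))))))))) := by group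
    _ = q * (q * q) * (y * (a⁻¹ * (e * (a * (d * (e * (d * (c * (d * (a * d)))))))))) := by
        rw [hl]

end StepGeneric

end Aux
end SphereEMCG
namespace SphereEMCG
namespace Aux

variable {n : ℕ}

lemma ind2 (hn : 6 ≤ n) : ∀ t, 2 * t + 5 ≤ n →
    TP n 1 (t + 1) * (Sp n 1 (2 * t + 4) * Sp n 1 (2 * t + 4)) *
      (σ n (2 * t + 1) * (σ n (2 * t + 2) * σ n (2 * t + 4))) =
    Sp n 1 (2 * t + 4) * (Sp n 1 (2 * t + 4) * Sp n 1 (2 * t + 4)) *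
      (OD n 1 (t + 1) * σ n (2 * t + 4)) := by
  intro t
  induction t with
  | zero =>
    intro h
    norm_num only
    set Q := Sp n 1 4 with hQdef
    have hQ : Q = σ n 1 * (σ n 2 * (σ n 3 * σ n 4)) := by
      rw [hQdef, show (4 : ℕ) = 3 + 1 from rfl, Sp_succ_left,
        show (3 : ℕ) = 2 + 1 from rfl, Sp_succ_left, show (2 : ℕ) = 1 + 1 from rfl,
        Sp_succ_left, Sp_one]
    have hm : (4 : ℕ) ≤ n - 1 := by omega
    have S1 : ∀ x : EM n, Q * (σ n 1 * x) = σ n 2 * (Q * x) := fun x => by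
      have := Sp_shift (n := n) (m := 4) (i := 1) hm (by norm_num) (by norm_num)
      norm_num only at this
      rw [hQdef, ← mul_assoc, this, mul_assoc]
    have S2 : ∀ x : EM n, Q * (σ n 2 * x) = σ n 3 * (Q * x) := fun x => by
      have := Sp_shift (n := n) (m := 4) (i := 2) hm (by norm_num) (by norm_num)
      norm_num only at this
      rw [hQdef, ← mul_assoc, this, mul_assoc]
    have S3 : ∀ x : EM n, Q * (σ n 3 * x) = σ n 4 * (Q * x) := fun x => by
      have := Sp_shift (n := n) (m := 4) (i := 3) hm (by norm_num) (by norm_num)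
      norm_num only at this
      rw [hQdef, ← mul_assoc, this, mul_assoc]
    have hbr : σ n 3 * σ n 4 * σ n 3 = σ n 4 * σ n 3 * σ n 4 := by
      have := hbraid (n := n) 3 (by norm_num) (by omega)
      norm_num only at this
      exact this
    have hTP : TP n 1 1 = σ n 1 * σ n 2 * σ n 4 := by
      rw [TP_one]
    have hOD : OD n 1 1 = σ n 1 := by
      rw [show (1 : ℕ) = 0 + 1 from rfl, OD_succ, OD_zero, one_mul]
    rw [hTP, hOD]
    calc σ n 1 * σ n 2 * σ n 4 * (Q * Q) * (σ n 1 * (σ n 2 * σ n 4))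
        = σ n 1 * σ n 2 * σ n 4 * (Q * (Q * (σ n 1 * (σ n 2 * σ n 4)))) := by group
      _ = σ n 1 * σ n 2 * σ n 4 * (Q * (σ n 2 * (Q * (σ n 2 * σ n 4)))) := by rw [S1]
      _ = σ n 1 * σ n 2 * σ n 4 * (σ n 3 * (Q * (Q * (σ n 2 * σ n 4)))) := by rw [S2]
      _ = σ n 1 * σ n 2 * σ n 4 * (σ n 3 * (Q * (σ n 3 * (Q * σ n 4)))) := by rw [S2]
      _ = σ n 1 * σ n 2 * σ n 4 * (σ n 3 * (σ n 4 * (Q * (Q * σ n 4)))) := by rw [S3]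
      _ = σ n 1 * (σ n 2 * ((σ n 4 * σ n 3 * σ n 4) * (Q * (Q * σ n 4)))) := by group
      _ = σ n 1 * (σ n 2 * ((σ n 3 * σ n 4 * σ n 3) * (Q * (Q * σ n 4)))) := by rw [hbr]
      _ = Q * (σ n 3 * (Q * (Q * σ n 4))) := by rw [hQ]; group
      _ = σ n 4 * (Q * (Q * (Q * σ n 4))) := by rw [S3]
      _ = Q * (Q * Q) * (σ n 1 * σ n 4) := by
          rw [← S3, ← S2, ← S1]
          group
  | succ t ih =>
    intro h
    -- abbreviations
    set q := Sp n 1 (2 * t + 4) with hqdef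
    set g1 := σ n (2 * t + 1) with hg1
    set g2 := σ n (2 * t + 2) with hg2
    set a := σ n (2 * t + 3) with ha
    set b := σ n (2 * t + 4) with hb
    set c := σ n (2 * t + 5) with hc
    set d := σ n (2 * t + 6) with hd
    set y := OD n 1 (t + 1) with hy
    have hm : 2 * t + 4 ≤ n - 1 := by omega
    -- shift relations
    have h1 : g2 * q = q * g1 := by
      have := Sp_shift (n := n) (m := 2 * t + 4) (i := 2 * t + 1) hm (by omega) (by omega)
      rw [show 2 * t + 1 + 1 = 2 * t + 2 by omega] at this
      rw [hg1, hg2, hqdef, this]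
    have h2 : a * q = q * g2 := by
      have := Sp_shift (n := n) (m := 2 * t + 4) (i := 2 * t + 2) hm (by omega) (by omega)
      rw [show 2 * t + 2 + 1 = 2 * t + 3 by omega] at this
      rw [ha, hg2, hqdef, this]
    have h3 : b * q = q * a := by
      have := Sp_shift (n := n) (m := 2 * t + 4) (i := 2 * t + 3) hm (by omega) (by omega)
      rw [show 2 * t + 3 + 1 = 2 * t + 4 by omega] at this
      rw [ha, hb, hqdef, this]
    have hqsplit : q = Sp n 1 (2 * t + 3) * b := by
      have := Sp_succ_right (n := n) 1 (2 * t + 3)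
      rw [show 2 * t + 3 + 1 = 2 * t + 4 by omega, show 1 + (2 * t + 3) = 2 * t + 4 by omega]
        at this
      rw [hqdef, hb, this]
    have hcq : c * q = q * (b⁻¹ * (c * b)) := by
      rw [hqsplit, hc, hb]
      have hcomm' : σ n (2 * t + 5) * Sp n 1 (2 * t + 3) = Sp n 1 (2 * t + 3) * σ n (2 * t + 5) :=
        comm_Sp_big (by omega)
      calc σ n (2 * t + 5) * (Sp n 1 (2 * t + 3) * σ n (2 * t + 4))
          = (σ n (2 * t + 5) * Sp n 1 (2 * t + 3)) * σ n (2 * t + 4) := by group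
        _ = (Sp n 1 (2 * t + 3) * σ n (2 * t + 5)) * σ n (2 * t + 4) := by rw [hcomm']
        _ = Sp n 1 (2 * t + 3) * σ n (2 * t + 4) *
              ((σ n (2 * t + 4))⁻¹ * (σ n (2 * t + 5) * σ n (2 * t + 4))) := by group
    have hdq : d * q = q * d := by
      rw [hd, hqdef]
      exact comm_Sp_big (by omega)
    -- y commutation
    have hya : y * a = a * y := by rw [hy, ha]; exact (comm_OD_big (by omega)).symm
    have hyb : y * b = b * y := by rw [hy, hb]; exact (comm_OD_big (by omega)).symm
    have hyc : y * c = c * y := by rw [hy, hc]; exact (comm_OD_big (by omega)).symm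
    have hyd : y * d = d * y := by rw [hy, hd]; exact (comm_OD_big (by omega)).symm
    -- braid relations
    have hab : a * b * a = b * a * b := by
      have := hbraid (n := n) (2 * t + 3) (by omega) (by omega)
      rw [show 2 * t + 3 + 1 = 2 * t + 4 by omega] at this
      rw [ha, hb]; exact this
    have hbc : b * c * b = c * b * c := by
      have := hbraid (n := n) (2 * t + 4) (by omega) (by omega)
      rw [show 2 * t + 4 + 1 = 2 * t + 5 by omega] at this
      rw [hb, hc]; exact this
    have hcd : c * d * c = d * c * d := by
      have := hbraid (n := n) (2 * t + 5) (by omega) (by omega)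
      rw [show 2 * t + 5 + 1 = 2 * t + 6 by omega] at this
      rw [hc, hd]; exact this
    have hac : a * c = c * a := by rw [ha, hc]; exact hcomm (by omega)
    have had : a * d = d * a := by rw [ha, hd]; exact hcomm (by omega)
    have hbd : b * d = d * b := by rw [hb, hd]; exact hcomm (by omega)
    -- IH in the required shape
    have IH : TP n 1 (t + 1) * (q * q) * (g1 * (g2 * b)) = q * (q * q) * (y * b) :=
      ih (by omega)
    have key := step_generic q y g1 g2 a b c d (TP n 1 (t + 1))
      h1 h2 h3 hcq hdq hya hyb hyc hyd hab hbc hcd hac had hbd IH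
    -- bridge to the goal
    have hQ : Sp n 1 (2 * (t + 1) + 4) = q * (c * d) := by
      have e1 := Sp_append (n := n) 1 (2 * t + 4) 2
      rw [show 2 * t + 4 + 2 = 2 * (t + 1) + 4 by omega,
        show 1 + (2 * t + 4) = 2 * t + 5 by omega] at e1
      have e2 : Sp n (2 * t + 5) 2 = σ n (2 * t + 5) * σ n (2 * t + 6) := by
        have := Sp_succ_left (n := n) (2 * t + 5) 1
        rw [Sp_one, show 2 * t + 5 + 1 = 2 * t + 6 by omega] at this
        exact this
      rw [e1, e2, hqdef, hc, hd]
    have hTP2 : TP n 1 (t + 1 + 1) = TP n 1 (t + 1) * (a * (b * d)) := by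
      have := TP_succ (n := n) 1 (t + 1)
      rw [show 1 + 2 * (t + 1) = 2 * t + 3 by omega,
        show 2 * t + 3 + 1 = 2 * t + 4 by omega,
        show 2 * t + 3 + 3 = 2 * t + 6 by omega] at this
      rw [this, ha, hb, hd]; group
    have hOD2 : OD n 1 (t + 1 + 1) = y * a := by
      have := OD_succ (n := n) 1 (t + 1)
      rw [show 2 * (t + 1) + 1 = 2 * t + 3 by omega] at this
      rw [this, hy, ha]
    simp only [show 2 * (t + 1) + 1 = 2 * t + 3 by omega,
      show 2 * (t + 1) + 2 = 2 * t + 4 by omega,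
      show 2 * (t + 1) + 4 = 2 * t + 6 by omega] at hQ ⊢
    rw [hQ, hTP2, hOD2, ← ha, ← hb]
    exact key

end Aux
end SphereEMCG
namespace SphereEMCG
namespace Aux

variable {n : ℕ}

lemma TP_shift (hn : 6 ≤ n) : ∀ k c, 1 ≤ c → c + 2 * k + 2 ≤ n - 2 →
    TP n (c + 1) k * Sp n 1 (n - 2) = Sp n 1 (n - 2) * TP n c k := by
  intro k
  induction k with
  | zero => intro c _ _; rw [TP_zero, TP_zero, one_mul, mul_one]
  | succ k ih =>
    intro c hc htop
    have hm : n - 2 ≤ n - 1 := by omega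
    have s1 : Sp n 1 (n - 2) * σ n (c + 2 * k) = σ n (c + 2 * k + 1) * Sp n 1 (n - 2) :=
      Sp_shift hm (by omega) (by omega)
    have s2 : Sp n 1 (n - 2) * σ n (c + 2 * k + 1) = σ n (c + 2 * k + 2) * Sp n 1 (n - 2) :=
      Sp_shift hm (by omega) (by omega)
    have s3 : Sp n 1 (n - 2) * σ n (c + 2 * k + 3) = σ n (c + 2 * k + 4) * Sp n 1 (n - 2) :=
      Sp_shift hm (by omega) (by omega)
    have e1 := TP_succ (n := n) (c + 1) k
    rw [show c + 1 + 2 * k = c + 2 * k + 1 by omega, show c + 2 * k + 1 + 1 = c + 2 * k + 2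
      by omega, show c + 2 * k + 1 + 3 = c + 2 * k + 4 by omega] at e1
    rw [e1, TP_succ]
    calc TP n (c + 1) k * (σ n (c + 2 * k + 1) * σ n (c + 2 * k + 2) * σ n (c + 2 * k + 4)) *
          Sp n 1 (n - 2)
        = TP n (c + 1) k * (σ n (c + 2 * k + 1) * (σ n (c + 2 * k + 2) *
            (σ n (c + 2 * k + 4) * Sp n 1 (n - 2)))) := by group
      _ = TP n (c + 1) k * (σ n (c + 2 * k + 1) * (σ n (c + 2 * k + 2) *
            (Sp n 1 (n - 2) * σ n (c + 2 * k + 3)))) := by rw [← s3]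
      _ = TP n (c + 1) k * (σ n (c + 2 * k + 1) * ((σ n (c + 2 * k + 2) * Sp n 1 (n - 2)) *
            σ n (c + 2 * k + 3))) := by group
      _ = TP n (c + 1) k * (σ n (c + 2 * k + 1) * ((Sp n 1 (n - 2) * σ n (c + 2 * k + 1)) *
            σ n (c + 2 * k + 3))) := by rw [← s2]
      _ = TP n (c + 1) k * ((σ n (c + 2 * k + 1) * Sp n 1 (n - 2)) *
            (σ n (c + 2 * k + 1) * σ n (c + 2 * k + 3))) := by group
      _ = TP n (c + 1) k * ((Sp n 1 (n - 2) * σ n (c + 2 * k)) *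
            (σ n (c + 2 * k + 1) * σ n (c + 2 * k + 3))) := by rw [← s1]
      _ = (TP n (c + 1) k * Sp n 1 (n - 2)) * (σ n (c + 2 * k) *
            (σ n (c + 2 * k + 1) * σ n (c + 2 * k + 3))) := by group
      _ = (Sp n 1 (n - 2) * TP n c k) * (σ n (c + 2 * k) *
            (σ n (c + 2 * k + 1) * σ n (c + 2 * k + 3))) := by rw [ih c hc (by omega)]
      _ = Sp n 1 (n - 2) * (TP n c k * (σ n (c + 2 * k) * σ n (c + 2 * k + 1) *
            σ n (c + 2 * k + 3))) := by group

lemma ind1 (hn : 6 ≤ n) : ∀ k c, 1 ≤ k → 1 ≤ c → c + 2 * k = n - 3 →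
    (Sp n 1 (n - 2) * (Sp n 1 (n - 2) * (σ n (n - 5) * (σ n (n - 4) * σ n (n - 2))))) ^ k =
      Sp n 1 (n - 2) ^ (2 * k) * TP n c k := by
  intro k
  induction k with
  | zero => omega
  | succ k ih =>
    intro c hk hc hsum
    rcases Nat.eq_zero_or_pos k with hk0 | hk0
    · subst hk0
      have hc' : c = n - 5 := by omega
      subst hc'
      have e1 := TP_one (n := n) (n - 5)
      rw [show n - 5 + 1 = n - 4 by omega, show n - 5 + 3 = n - 2 by omega] at e1
      rw [pow_one, e1, show 2 * 1 = 2 from rfl, sq]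
      group
    · have key := ih (c + 2) hk0 (by omega) (by omega)
      have ts1 : TP n (c + 2) k * Sp n 1 (n - 2) = Sp n 1 (n - 2) * TP n (c + 1) k := by
        have := TP_shift hn k (c + 1) (by omega) (by omega)
        rwa [show c + 1 + 1 = c + 2 by omega] at this
      have ts2 : TP n (c + 1) k * Sp n 1 (n - 2) = Sp n 1 (n - 2) * TP n c k :=
        TP_shift hn k c hc (by omega)
      have e2 := TP_succ (n := n) c k
      rw [show c + 2 * k = n - 5 by omega, show n - 5 + 1 = n - 4 by omega,
        show n - 5 + 3 = n - 2 by omega] at e2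
      calc (Sp n 1 (n - 2) * (Sp n 1 (n - 2) * (σ n (n - 5) * (σ n (n - 4) * σ n (n - 2))))) ^
            (k + 1)
          = (Sp n 1 (n - 2) * (Sp n 1 (n - 2) * (σ n (n - 5) * (σ n (n - 4) * σ n (n - 2))))) ^ k *
            (Sp n 1 (n - 2) * (Sp n 1 (n - 2) * (σ n (n - 5) * (σ n (n - 4) * σ n (n - 2))))) := by
            rw [pow_succ]
        _ = Sp n 1 (n - 2) ^ (2 * k) * ((TP n (c + 2) k * Sp n 1 (n - 2)) *
              (Sp n 1 (n - 2) * (σ n (n - 5) * (σ n (n - 4) * σ n (n - 2))))) := by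
            rw [key]; group
        _ = Sp n 1 (n - 2) ^ (2 * k) * (Sp n 1 (n - 2) * ((TP n (c + 1) k * Sp n 1 (n - 2)) *
              (σ n (n - 5) * (σ n (n - 4) * σ n (n - 2))))) := by
            rw [ts1]; group
        _ = Sp n 1 (n - 2) ^ (2 * k) * (Sp n 1 (n - 2) * (Sp n 1 (n - 2) * (TP n c k *
              (σ n (n - 5) * (σ n (n - 4) * σ n (n - 2)))))) := by
            rw [ts2]; group
        _ = Sp n 1 (n - 2) ^ (2 * (k + 1)) * TP n c (k + 1) := by
            rw [e2, show 2 * (k + 1) = 2 * k + 1 + 1 by ring, pow_succ, pow_succ]; group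

end Aux
end SphereEMCG
namespace SphereEMCG
namespace Aux

variable {n : ℕ}

lemma ab_eq (hn : 6 ≤ n) :
    (σ n (n - 3) * T n * α₀ n * (σ n (n - 3))⁻¹) * (T n * (σ n (n - 1))⁻¹ * α₂ n) =
      Sp n 1 (n - 2) * (Sp n 1 (n - 2) * (σ n (n - 5) * (σ n (n - 4) * σ n (n - 2)))) := by
  have hδ : α₀ n = Sp n 1 (n - 1) := α₀_eq
  have hα₂ : α₂ n = Sp n 1 (n - 2) * σ n (n - 2) := α₂_eq
  have st : (σ n (n - 3))⁻¹ * T n = T n * σ n (n - 3) := σ_T _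
  have hTd : T n * Sp n 1 (n - 1) * T n = Sp n 1 (n - 1) := hTδ
  have sh1 : Sp n 1 (n - 1) * σ n (n - 3) = σ n (n - 2) * Sp n 1 (n - 1) := by
    have := Sp_shift (n := n) (m := n - 1) (i := n - 3) (le_refl _) (by omega) (by omega)
    rwa [show n - 3 + 1 = n - 2 by omega] at this
  have hPδ : Sp n 1 (n - 1) = Sp n 1 (n - 2) * σ n (n - 1) := by
    have := Sp_succ_right (n := n) 1 (n - 2)
    rw [show n - 2 + 1 = n - 1 by omega, show 1 + (n - 2) = n - 1 by omega] at this
    exact this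
  have sh2 : σ n (n - 2) * Sp n 1 (n - 2) = Sp n 1 (n - 2) * σ n (n - 3) := by
    have := Sp_shift (n := n) (m := n - 2) (i := n - 3) (by omega) (by omega) (by omega)
    rw [show n - 3 + 1 = n - 2 by omega] at this
    exact this.symm
  have sh3 : σ n (n - 3) * Sp n 1 (n - 2) = Sp n 1 (n - 2) * σ n (n - 4) := by
    have := Sp_shift (n := n) (m := n - 2) (i := n - 4) (by omega) (by omega) (by omega)
    rw [show n - 4 + 1 = n - 3 by omega] at this
    exact this.symm
  have sh4 : σ n (n - 4) * Sp n 1 (n - 2) = Sp n 1 (n - 2) * σ n (n - 5) := by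
    have := Sp_shift (n := n) (m := n - 2) (i := n - 5) (by omega) (by omega) (by omega)
    rw [show n - 5 + 1 = n - 4 by omega] at this
    exact this.symm
  calc (σ n (n - 3) * T n * α₀ n * (σ n (n - 3))⁻¹) * (T n * (σ n (n - 1))⁻¹ * α₂ n)
      = σ n (n - 3) * T n * Sp n 1 (n - 1) * ((σ n (n - 3))⁻¹ * T n) * (σ n (n - 1))⁻¹ *
          (Sp n 1 (n - 2) * σ n (n - 2)) := by rw [hδ, hα₂]; group
    _ = σ n (n - 3) * (T n * Sp n 1 (n - 1) * T n) * σ n (n - 3) * (σ n (n - 1))⁻¹ *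
          (Sp n 1 (n - 2) * σ n (n - 2)) := by rw [st]; group
    _ = σ n (n - 3) * (Sp n 1 (n - 1) * σ n (n - 3)) * (σ n (n - 1))⁻¹ *
          (Sp n 1 (n - 2) * σ n (n - 2)) := by rw [hTd]; group
    _ = σ n (n - 3) * (σ n (n - 2) * (Sp n 1 (n - 1) * (σ n (n - 1))⁻¹)) *
          (Sp n 1 (n - 2) * σ n (n - 2)) := by rw [sh1]; group
    _ = σ n (n - 3) * (σ n (n - 2) * Sp n 1 (n - 2)) * (Sp n 1 (n - 2) * σ n (n - 2)) := by
        rw [hPδ]; group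
    _ = (σ n (n - 3) * Sp n 1 (n - 2)) * σ n (n - 3) * (Sp n 1 (n - 2) * σ n (n - 2)) := by
        rw [sh2]; group
    _ = (σ n (n - 3) * Sp n 1 (n - 2)) * ((σ n (n - 3) * Sp n 1 (n - 2)) * σ n (n - 2)) := by
        group
    _ = (Sp n 1 (n - 2) * σ n (n - 4)) * ((Sp n 1 (n - 2) * σ n (n - 4)) * σ n (n - 2)) := by
        rw [sh3]
    _ = Sp n 1 (n - 2) * ((σ n (n - 4) * Sp n 1 (n - 2)) * (σ n (n - 4) * σ n (n - 2))) := by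
        group
    _ = Sp n 1 (n - 2) * ((Sp n 1 (n - 2) * σ n (n - 5)) * (σ n (n - 4) * σ n (n - 2))) := by
        rw [sh4]
    _ = Sp n 1 (n - 2) * (Sp n 1 (n - 2) * (σ n (n - 5) * (σ n (n - 4) * σ n (n - 2)))) := by
        group

lemma main_eq (hn : 6 ≤ n) (heven : Even n) :
    ((σ n (n - 3) * T n * α₀ n * (σ n (n - 3))⁻¹) *
        (T n * (σ n (n - 1))⁻¹ * α₂ n)) ^ (n / 2 - 1) =
      OD n 1 ((n - 4) / 2) * σ n (n - 2) := by
  obtain ⟨K, hK⟩ : ∃ K, n = 2 * K + 6 := by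
    obtain ⟨r, hr⟩ := heven
    exact ⟨(n - 6) / 2, by omega⟩
  rw [ab_eq hn]
  rw [show n / 2 - 1 = K + 2 by omega, show (n - 4) / 2 = K + 1 by omega]
  have h1 := ind1 hn (K + 1) 1 (by omega) (by omega) (by omega)
  have h2 := ind2 hn K (by omega)
  simp only [show 2 * K + 4 = n - 2 by omega, show 2 * K + 1 = n - 5 by omega,
    show 2 * K + 2 = n - 4 by omega] at h2
  have hP5 : Sp n 1 (n - 2) ^ (2 * (K + 1)) * (Sp n 1 (n - 2) * (Sp n 1 (n - 2) *
      Sp n 1 (n - 2))) = 1 := by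
    have : Sp n 1 (n - 2) ^ (2 * (K + 1)) * (Sp n 1 (n - 2) * (Sp n 1 (n - 2) *
        Sp n 1 (n - 2))) = Sp n 1 (n - 2) ^ (2 * (K + 1) + 3) := by
      rw [pow_add]; group
    rw [this, show 2 * (K + 1) + 3 = n - 1 by omega, P_pow_eq_one hn]
  calc (Sp n 1 (n - 2) * (Sp n 1 (n - 2) * (σ n (n - 5) * (σ n (n - 4) * σ n (n - 2))))) ^ (K + 2)
      = (Sp n 1 (n - 2) * (Sp n 1 (n - 2) * (σ n (n - 5) * (σ n (n - 4) * σ n (n - 2))))) ^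
          (K + 1) *
        (Sp n 1 (n - 2) * (Sp n 1 (n - 2) * (σ n (n - 5) * (σ n (n - 4) * σ n (n - 2))))) := by
        rw [pow_succ]
    _ = Sp n 1 (n - 2) ^ (2 * (K + 1)) * (TP n 1 (K + 1) *
          (Sp n 1 (n - 2) * Sp n 1 (n - 2)) * (σ n (n - 5) * (σ n (n - 4) * σ n (n - 2)))) := by
        rw [h1]; group
    _ = Sp n 1 (n - 2) ^ (2 * (K + 1)) * (Sp n 1 (n - 2) * (Sp n 1 (n - 2) * Sp n 1 (n - 2)) *
          (OD n 1 (K + 1) * σ n (n - 2))) := by rw [h2]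
    _ = (Sp n 1 (n - 2) ^ (2 * (K + 1)) * (Sp n 1 (n - 2) * (Sp n 1 (n - 2) *
          Sp n 1 (n - 2)))) * (OD n 1 (K + 1) * σ n (n - 2)) := by group
    _ = OD n 1 (K + 1) * σ n (n - 2) := by rw [hP5, one_mul]

end Aux
end SphereEMCG
open SphereEMCG in
/-- For every even `n ≥ 6`, with `a = σ_{n-3} T α₀ σ_{n-3}⁻¹` and
`b = T σ_{n-1}⁻¹ α₂` in the extended mapping class group of the `n`-punctured
sphere, `(ab)^{n/2 - 1} = σ₁ σ₃ ⋯ σ_{n-5} σ_{n-2}`; in particular the element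
`z = σ₁ σ₃ ⋯ σ_{n-5} σ_{n-2}` belongs to the subgroup generated by `a` and `b`. -/
theorem ab_power_eq_z_and_z_mem_closure (n : ℕ) (hn : 6 ≤ n) (heven : Even n) :
    ((σ n (n - 3) * T n * α₀ n * (σ n (n - 3))⁻¹) *
        (T n * (σ n (n - 1))⁻¹ * α₂ n)) ^ (n / 2 - 1) =
      ((List.range ((n - 4) / 2)).map (fun j => σ n (2 * j + 1))).prod *
        σ n (n - 2) ∧
    ((List.range ((n - 4) / 2)).map (fun j => σ n (2 * j + 1))).prod *
        σ n (n - 2) ∈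
      Subgroup.closure
        {σ n (n - 3) * T n * α₀ n * (σ n (n - 3))⁻¹,
         T n * (σ n (n - 1))⁻¹ * α₂ n} := by
  constructor
  · have h := SphereEMCG.Aux.main_eq hn heven
    exact h
  · have h := SphereEMCG.Aux.main_eq hn heven
    rw [show ((List.range ((n - 4) / 2)).map (fun j => σ n (2 * j + 1))).prod * σ n (n - 2)
        = SphereEMCG.Aux.OD n 1 ((n - 4) / 2) * σ n (n - 2) from rfl, ← h]
    refine Subgroup.pow_mem _ (mul_mem ?_ ?_) _
    · exact Subgroup.subset_closure (Set.mem_insert _ _)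
    · exact Subgroup.subset_closure (Set.mem_insert_of_mem _ rfl)
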